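/- Let L be an ortholattice and n ≥ 3. The following are equivalent: (i) the n-Go equation a₁ ≡γ aₙ = aₙ ≡γ a₁ holds for all a₁,…,aₙ ∈ L; (ii) a₁ ≡γ aₙ = (a₁ ≡ a₂) ⊓ (a₂ ≡ a₃) ⊓ ⋯ ⊓ (aₙ₋₁ ≡ aₙ) for all a₁,…,aₙ ∈ L; (iii) a₁ ≡γ aₙ ≤ a₁ → aₙ for all a₁,…,aₙ ∈ L; (iv) (a₁ ≡γ aₙ) ⊓ (a₁ ⊔ a₂ ⊔ ⋯ ⊔ aₙ) = a₁ ⊓ a₂ ⊓ ⋯ ⊓ aₙ for all a₁,…,aₙ ∈ L. -/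

import Mathlib

/-- An ortholattice: a bounded lattice with an orthocomplementation. -/
class Ortholattice (α : Type*) extends Lattice α, BoundedOrder α, Compl α where
  compl_compl : ∀ a : α, aᶜᶜ = a
  compl_le_compl : ∀ a b : α, a ≤ b → bᶜ ≤ aᶜ
  inf_compl_self : ∀ a : α, a ⊓ aᶜ = ⊥
  sup_compl_self : ∀ a : α, a ⊔ aᶜ = ⊤

/-- The Sasaki hook `a → b := a' ⊔ (a ⊓ b)`. -/
def sasaki {α : Type*} [Ortholattice α] (a b : α) : α := aᶜ ⊔ (a ⊓ b)

/-- The quantum equivalence `a ≡ b := (a ⊓ b) ⊔ (a' ⊓ b')`. -/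
def oequiv {α : Type*} [Ortholattice α] (a b : α) : α := (a ⊓ b) ⊔ (aᶜ ⊓ bᶜ)

/-- The Godowski identity `a₁ ≡γ aₙ = (a₁→a₂) ⊓ ⋯ ⊓ (aₙ₋₁→aₙ) ⊓ (aₙ→a₁)`. -/
def goFwd {α : Type*} [Ortholattice α] (n : ℕ) (hn : 3 ≤ n) (a : Fin n → α) : α :=
  Finset.univ.inf fun i : Fin n => sasaki (a i) (a (i + ⟨1, by omega⟩))

/-- The Godowski identity `aₙ ≡γ a₁ = (aₙ→aₙ₋₁) ⊓ ⋯ ⊓ (a₂→a₁) ⊓ (a₁→aₙ)`. -/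
def goBwd {α : Type*} [Ortholattice α] (n : ℕ) (hn : 3 ≤ n) (a : Fin n → α) : α :=
  Finset.univ.inf fun i : Fin n => sasaki (a (i + ⟨1, by omega⟩)) (a i)

/-!
Rotating the tuple in (iii) puts `a₁ ≡γ aₙ` below every backward hook `aᵢ₊₁ → aᵢ`, and reversing
it gives the converse inequality: this is (i). Both (iii) and (iv), tested on the tuples
`(pᶜ, qᶜ, …, qᶜ, ⊥)` and `(x, y, …, y)`, force orthomodularity. In an orthomodular lattice
`(a → b) ⊓ (b → a) = a ≡ b` and `(a ≡ b) ⊓ (b ≡ c) ≤ a ≡ c`, so under (i) the Godowski product is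
the chain of `≡`, which is invariant under reversal, and lies below every `a₁ ≡ aⱼ`. The meet `v` of
these `a₁ ≡ aⱼ` commutes with `a₁`, hence `v ≤ (⋀ aᵢ) ≡ (⋁ aᵢ)`, which gives (iv). Conversely,
replacing each `aᵢ` by `sᶜ ⊔ aᵢ` with `s = ⋁ aᵢ` makes the join `⊤`, so that (iv) evaluates the
product, and orthomodularity brings the result below `a₁ → aₙ`.
-/

namespace Ortholattice

variable {α : Type*} [Ortholattice α] {a b c s x y w : α}

theorem le_compl_comm : a ≤ bᶜ ↔ b ≤ aᶜ :=
  ⟨fun h => by simpa only [compl_compl] using compl_le_compl _ _ h,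
    fun h => by simpa only [compl_compl] using compl_le_compl _ _ h⟩

theorem compl_sup (a b : α) : (a ⊔ b)ᶜ = aᶜ ⊓ bᶜ :=
  le_antisymm (le_inf (compl_le_compl _ _ le_sup_left) (compl_le_compl _ _ le_sup_right))
    (le_compl_comm.1 (sup_le (le_compl_comm.1 inf_le_left) (le_compl_comm.1 inf_le_right)))

theorem compl_inf (a b : α) : (a ⊓ b)ᶜ = aᶜ ⊔ bᶜ := by
  rw [← compl_compl (aᶜ ⊔ bᶜ), compl_sup, compl_compl, compl_compl]

theorem compl_bot : (⊥ : α)ᶜ = ⊤ := by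
  simpa only [bot_sup_eq] using sup_compl_self (⊥ : α)

theorem compl_le_sasaki (a b : α) : aᶜ ≤ sasaki a b := le_sup_left

theorem inf_le_sasaki (a b : α) : a ⊓ b ≤ sasaki a b := le_sup_right

theorem sasaki_bot_left (b : α) : sasaki ⊥ b = ⊤ := by
  rw [sasaki, compl_bot, top_sup_eq]

theorem sasaki_bot_right (a : α) : sasaki a ⊥ = aᶜ := by
  rw [sasaki, inf_bot_eq, sup_bot_eq]

theorem sasaki_of_le (h : a ≤ b) : sasaki a b = ⊤ := by
  rw [sasaki, inf_eq_left.2 h, sup_comm, sup_compl_self]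

theorem oequiv_comm (a b : α) : oequiv a b = oequiv b a := by
  rw [oequiv, oequiv, inf_comm, inf_comm aᶜ]

theorem oequiv_self (a : α) : oequiv a a = ⊤ := by
  rw [oequiv, inf_idem, inf_idem, sup_compl_self]

theorem oequiv_compl_compl (a b : α) : oequiv aᶜ bᶜ = oequiv a b := by
  rw [oequiv, oequiv, compl_compl, compl_compl, sup_comm]

theorem oequiv_le_sasaki (a b : α) : oequiv a b ≤ sasaki a b :=
  sup_le le_sup_right (inf_le_left.trans le_sup_left)

/-- The orthomodular law `a ≤ b → b ⊓ (bᶜ ⊔ a) = a`, stated with `≤`: the inequality `≥` holds in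
every ortholattice. -/
def IsOrthomodular (α : Type*) [Ortholattice α] : Prop :=
  ∀ ⦃a b : α⦄, a ≤ b → b ⊓ (bᶜ ⊔ a) ≤ a

/-- Commutation `a = (a ⊓ b) ⊔ (a ⊓ bᶜ)`, stated with `≤`: the inequality `≥` always holds. -/
def Commutes (a b : α) : Prop :=
  a ≤ a ⊓ b ⊔ a ⊓ bᶜ

theorem commutes_top (b : α) : Commutes ⊤ b := by
  simp only [Commutes, top_inf_eq, sup_compl_self, le_refl]

theorem commutes_oequiv_left (a b : α) : Commutes (oequiv a b) a :=
  sup_le (le_sup_of_le_left (le_inf le_sup_left inf_le_left))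
    (le_sup_of_le_right (le_inf le_sup_right inf_le_left))

theorem commutes_oequiv_right (a b : α) : Commutes (oequiv a b) b :=
  oequiv_comm b a ▸ commutes_oequiv_left b a

theorem Commutes.compl_right (h : Commutes a b) : Commutes a bᶜ := by
  rwa [Commutes, compl_compl, sup_comm]

theorem Commutes.sup_left (ha : Commutes a c) (hb : Commutes b c) : Commutes (a ⊔ b) c :=
  sup_le (ha.trans (sup_le_sup (inf_le_inf_right _ le_sup_left) (inf_le_inf_right _ le_sup_left)))
    (hb.trans (sup_le_sup (inf_le_inf_right _ le_sup_right) (inf_le_inf_right _ le_sup_right)))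

theorem Commutes.le_oequiv (h : Commutes w b) (hb : w ⊓ b ≤ a ⊓ c) (hb' : w ⊓ bᶜ ≤ aᶜ ⊓ cᶜ) :
    w ≤ oequiv a c :=
  h.trans (sup_le_sup hb hb')

section Orthomodular

variable (hα : IsOrthomodular α)
include hα

theorem IsOrthomodular.le_sup_compl_inf (h : a ≤ b) : b ≤ a ⊔ aᶜ ⊓ b := by
  have := le_compl_comm.1 (hα (compl_le_compl _ _ h))
  rwa [compl_inf, compl_compl, compl_sup, compl_compl] at this

theorem IsOrthomodular.oequiv_inf_le (a b : α) : oequiv a b ⊓ a ≤ b :=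
  calc oequiv a b ⊓ a ≤ a ⊓ (aᶜ ⊔ a ⊓ b) := by
        rw [inf_comm]
        exact inf_le_inf_left _ (sup_le le_sup_right (inf_le_left.trans le_sup_left))
    _ ≤ a ⊓ b := hα inf_le_left
    _ ≤ b := inf_le_right

theorem IsOrthomodular.oequiv_inf_compl_le (a b : α) : oequiv a b ⊓ aᶜ ≤ bᶜ :=
  oequiv_compl_compl a b ▸ hα.oequiv_inf_le aᶜ bᶜ

theorem IsOrthomodular.sasaki_inf_sasaki (a b : α) : sasaki a b ⊓ sasaki b a = oequiv a b := by
  set q := sasaki a b ⊓ sasaki b a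
  have hq : q ⊓ (a ⊓ b)ᶜ ≤ aᶜ ⊓ bᶜ := by
    have ha : sasaki a b = (a ⊓ b)ᶜᶜ ⊔ aᶜ := by rw [sasaki, compl_compl, sup_comm]
    have hb : sasaki b a = (a ⊓ b)ᶜᶜ ⊔ bᶜ := by rw [sasaki, compl_compl, sup_comm, inf_comm]
    refine le_inf ?_ ?_
    · calc q ⊓ (a ⊓ b)ᶜ ≤ (a ⊓ b)ᶜ ⊓ ((a ⊓ b)ᶜᶜ ⊔ aᶜ) := by
            rw [inf_comm, ← ha]; exact inf_le_inf_left _ inf_le_left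
        _ ≤ aᶜ := hα (compl_le_compl _ _ inf_le_left)
    · calc q ⊓ (a ⊓ b)ᶜ ≤ (a ⊓ b)ᶜ ⊓ ((a ⊓ b)ᶜᶜ ⊔ bᶜ) := by
            rw [inf_comm, ← hb]; exact inf_le_inf_left _ inf_le_right
        _ ≤ bᶜ := hα (compl_le_compl _ _ inf_le_right)
  refine le_antisymm ?_ (le_inf (oequiv_le_sasaki a b) (oequiv_comm a b ▸ oequiv_le_sasaki b a))
  calc q ≤ a ⊓ b ⊔ (a ⊓ b)ᶜ ⊓ q :=
        hα.le_sup_compl_inf (le_inf (inf_le_sasaki a b) (inf_comm a b ▸ inf_le_sasaki b a))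
    _ ≤ oequiv a b := sup_le_sup_left (inf_comm q _ ▸ hq) _

theorem Commutes.symm (h : Commutes a b) : Commutes b a := by
  have hsup : bᶜ ⊔ a ≤ bᶜ ⊔ a ⊓ b :=
    sup_le le_sup_left (h.trans (sup_le le_sup_right (inf_le_right.trans le_sup_left)))
  calc b ≤ b ⊓ aᶜ ⊔ (b ⊓ aᶜ)ᶜ ⊓ b := hα.le_sup_compl_inf inf_le_left
    _ ≤ b ⊓ aᶜ ⊔ b ⊓ a := by
        refine sup_le_sup_left ?_ _
        rw [compl_inf, compl_compl, inf_comm, inf_comm b a]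
        exact (inf_le_inf_left b hsup).trans (hα inf_le_right)
    _ = b ⊓ a ⊔ b ⊓ aᶜ := sup_comm _ _

theorem Commutes.compl_left (h : Commutes a b) : Commutes aᶜ b :=
  ((h.symm hα).compl_right).symm hα

theorem Commutes.inf_left (ha : Commutes a c) (hb : Commutes b c) : Commutes (a ⊓ b) c := by
  have := ((ha.compl_left hα).sup_left (hb.compl_left hα)).compl_left hα
  rwa [compl_sup, compl_compl, compl_compl] at this

theorem IsOrthomodular.oequiv_inf_oequiv_le (a b c : α) : oequiv a b ⊓ oequiv b c ≤ oequiv a c := by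
  refine ((commutes_oequiv_right a b).inf_left hα (commutes_oequiv_left b c)).le_oequiv
    (le_inf ?_ ?_) (le_inf ?_ ?_)
  · exact (inf_le_inf_right b inf_le_left).trans (oequiv_comm a b ▸ hα.oequiv_inf_le b a)
  · exact (inf_le_inf_right b inf_le_right).trans (hα.oequiv_inf_le b c)
  · exact (inf_le_inf_right bᶜ inf_le_left).trans (oequiv_comm a b ▸ hα.oequiv_inf_compl_le b a)
  · exact (inf_le_inf_right bᶜ inf_le_right).trans (hα.oequiv_inf_compl_le b c)

theorem IsOrthomodular.inf_oequiv_inf_sup_le {ι : Type*} {t : Finset ι} (f : ι → α) {i : ι}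
    (hi : i ∈ t) :
    (t.inf fun j => oequiv (f i) (f j)) ⊓ t.sup f ≤ t.inf f := by
  set v := t.inf fun j => oequiv (f i) (f j)
  have hv : Commutes v (f i) := Finset.inf_induction (p := (Commutes · (f i))) (commutes_top _)
    (fun _ h₁ _ h₂ => h₁.inf_left hα h₂) fun j _ => commutes_oequiv_left _ _
  have hvj : ∀ j ∈ t, v ≤ oequiv (f i) (f j) := fun j hj => Finset.inf_le hj
  have hle : v ≤ oequiv (t.inf f) (t.sup f) := hv.le_oequiv
    (le_inf (Finset.le_inf fun j hj => (inf_le_inf_right _ (hvj j hj)).trans (hα.oequiv_inf_le _ _))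
      (inf_le_right.trans (Finset.le_sup hi)))
    (le_inf (inf_le_right.trans (compl_le_compl _ _ (Finset.inf_le hi)))
      (le_compl_comm.1 (Finset.sup_le fun j hj => le_compl_comm.1
        ((inf_le_inf_right _ (hvj j hj)).trans (hα.oequiv_inf_compl_le _ _)))))
  calc v ⊓ t.sup f ≤ oequiv (t.sup f) (t.inf f) ⊓ t.sup f :=
        inf_le_inf_right _ (oequiv_comm (t.inf f) _ ▸ hle)
    _ ≤ t.inf f := hα.oequiv_inf_le _ _

theorem IsOrthomodular.compl_sup_inf_compl_sup_le (hx : x ≤ s) (hy : y ≤ s) :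
    (sᶜ ⊔ x) ⊓ (sᶜ ⊔ y) ≤ sᶜ ⊔ x ⊓ y := by
  set q := (sᶜ ⊔ x) ⊓ (sᶜ ⊔ y)
  calc q ≤ sᶜ ⊔ sᶜᶜ ⊓ q := hα.le_sup_compl_inf (le_inf le_sup_left le_sup_left)
    _ ≤ sᶜ ⊔ x ⊓ y := by
        rw [compl_compl]
        exact sup_le_sup_left (le_inf ((inf_le_inf_left s inf_le_left).trans (hα hx))
          ((inf_le_inf_left s inf_le_right).trans (hα hy))) _

theorem IsOrthomodular.sasaki_le_sasaki_compl_sup (hx : x ≤ s) (y : α) :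
    sasaki x y ≤ sasaki (sᶜ ⊔ x) (sᶜ ⊔ y) := by
  have hs : sᶜ ≤ sasaki (sᶜ ⊔ x) (sᶜ ⊔ y) := le_sup_of_le_right (le_inf le_sup_left le_sup_left)
  have hsx : s ⊓ xᶜ ≤ sasaki (sᶜ ⊔ x) (sᶜ ⊔ y) := by
    rw [sasaki, compl_sup, compl_compl]; exact le_sup_left
  refine sup_le ?_ (le_sup_of_le_right (inf_le_inf le_sup_right le_sup_right))
  calc xᶜ ≤ sᶜ ⊔ sᶜᶜ ⊓ xᶜ := hα.le_sup_compl_inf (compl_le_compl _ _ hx)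
    _ ≤ sasaki (sᶜ ⊔ x) (sᶜ ⊔ y) := by rw [compl_compl]; exact sup_le hs hsx

end Orthomodular

/-- `(a₁ ≡ a₂) ⊓ ⋯ ⊓ (aₙ₋₁ ≡ aₙ)`, indexed from `0`. -/
def oequivChain {n : ℕ} (a : Fin n → α) : α :=
  Finset.univ.inf fun i : Fin (n - 1) =>
    oequiv (a ⟨i.1, by have := i.2; omega⟩) (a ⟨i.1 + 1, by have := i.2; omega⟩)

theorem le_oequivChain_iff {n : ℕ} {a : Fin n → α} :
    w ≤ oequivChain a ↔ ∀ i : Fin (n - 1),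
      w ≤ oequiv (a ⟨i.1, by have := i.2; omega⟩) (a ⟨i.1 + 1, by have := i.2; omega⟩) := by
  simp [oequivChain]

theorem oequivChain_comp_rev {n : ℕ} (a : Fin n → α) :
    oequivChain (fun i => a i.rev) = oequivChain a := by
  refine eq_of_forall_le_iff fun w => ?_
  simp only [le_oequivChain_iff]
  refine Fin.revPerm.forall_congr fun i => ?_
  rw [oequiv_comm]
  congr! 3 <;> ext <;> simp only [Fin.val_rev, Fin.revPerm_apply] <;> omega

theorem IsOrthomodular.oequivChain_le_oequiv (hα : IsOrthomodular α) {n : ℕ} (a : Fin n → α)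
    (j : Fin n) : oequivChain a ≤ oequiv (a ⟨0, j.pos⟩) (a j) := by
  obtain ⟨k, hk⟩ := j
  induction k with
  | zero => rw [oequiv_self]; exact le_top
  | succ k ih =>
    exact (le_inf (ih (by omega)) (le_oequivChain_iff.1 le_rfl ⟨k, by omega⟩)).trans
      (hα.oequiv_inf_oequiv_le _ _ _)

section Godowski

variable {n : ℕ} (hn : n ≥ 3)
include hn

theorem le_goFwd_iff {a : Fin n → α} :
    w ≤ goFwd n hn a ↔ ∀ i, w ≤ sasaki (a i) (a (i + ⟨1, by omega⟩)) := by
  simp [goFwd]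

theorem le_goBwd_iff {a : Fin n → α} :
    w ≤ goBwd n hn a ↔ ∀ i, w ≤ sasaki (a (i + ⟨1, by omega⟩)) (a i) := by
  simp [goBwd]

theorem le_goFwd_iff_path {a : Fin n → α} :
    w ≤ goFwd n hn a ↔
      (∀ i : Fin (n - 1), w ≤ sasaki (a ⟨i.1, by omega⟩) (a ⟨i.1 + 1, by omega⟩)) ∧
        w ≤ sasaki (a ⟨n - 1, by omega⟩) (a ⟨0, by omega⟩) := by
  obtain ⟨m, rfl⟩ : ∃ m, n = m + 3 := ⟨n - 3, by omega⟩
  rw [le_goFwd_iff, Fin.forall_fin_succ']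
  simp only [Fin.mk_one, Fin.coeSucc_eq_succ, Fin.last_add_one]
  rfl

theorem le_goBwd_iff_path {a : Fin n → α} :
    w ≤ goBwd n hn a ↔
      (∀ i : Fin (n - 1), w ≤ sasaki (a ⟨i.1 + 1, by omega⟩) (a ⟨i.1, by omega⟩)) ∧
        w ≤ sasaki (a ⟨0, by omega⟩) (a ⟨n - 1, by omega⟩) := by
  obtain ⟨m, rfl⟩ : ∃ m, n = m + 3 := ⟨n - 3, by omega⟩
  rw [le_goBwd_iff, Fin.forall_fin_succ']
  simp only [Fin.mk_one, Fin.coeSucc_eq_succ, Fin.last_add_one]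
  rfl

theorem goFwd_comp_add_right (a : Fin n → α) (k : Fin n) :
    goFwd n hn (fun i => a (i + k)) = goFwd n hn a := by
  have : NeZero n := ⟨by omega⟩
  refine eq_of_forall_le_iff fun w => ?_
  simp only [le_goFwd_iff]
  exact (Equiv.addRight k).forall_congr fun i => by rw [Equiv.coe_addRight, add_right_comm]

theorem goFwd_comp_rev (a : Fin n → α) : goFwd n hn (fun i => a i.rev) = goBwd n hn a := by
  have : NeZero n := ⟨by omega⟩
  refine eq_of_forall_le_iff fun w => ?_
  simp only [le_goFwd_iff, le_goBwd_iff]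
  refine ((Equiv.addRight ⟨1, by omega⟩).trans Fin.revPerm).forall_congr fun i => ?_
  simp only [Equiv.trans_apply, Equiv.coe_addRight, Fin.revPerm_apply, Fin.rev_add, sub_add_cancel]

theorem goBwd_le_sasaki (a : Fin n → α) :
    goBwd n hn a ≤ sasaki (a ⟨0, by omega⟩) (a ⟨n - 1, by omega⟩) :=
  ((le_goBwd_iff_path hn).1 le_rfl).2

theorem goFwd_eq_goBwd_of_forall_le_sasaki
    (h : ∀ a : Fin n → α, goFwd n hn a ≤ sasaki (a ⟨0, by omega⟩) (a ⟨n - 1, by omega⟩))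
    (a : Fin n → α) : goFwd n hn a = goBwd n hn a := by
  have hle : ∀ a : Fin n → α, goFwd n hn a ≤ goBwd n hn a := by
    obtain ⟨m, rfl⟩ : ∃ m, n = m + 3 := ⟨n - 3, by omega⟩
    refine fun a => (le_goBwd_iff _).2 fun i => ?_
    have hi := h fun j => a (j + (i + 1))
    rw [goFwd_comp_add_right] at hi
    have hlast : (⟨m + 3 - 1, by omega⟩ : Fin (m + 3)) = Fin.last (m + 2) := rfl
    simpa only [Fin.mk_zero, Fin.mk_one, zero_add, hlast, add_left_comm _ i, Fin.last_add_one,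
      add_zero] using hi
  refine le_antisymm (hle a) ?_
  calc goBwd n hn a = goFwd n hn (fun i => a i.rev) := (goFwd_comp_rev hn a).symm
    _ ≤ goBwd n hn (fun i => a i.rev) := hle _
    _ = goFwd n hn a := by simp only [← goFwd_comp_rev, Fin.rev_rev]

theorem isOrthomodular_of_forall_goFwd_le_sasaki
    (h : ∀ a : Fin n → α, goFwd n hn a ≤ sasaki (a ⟨0, by omega⟩) (a ⟨n - 1, by omega⟩)) :
    IsOrthomodular α := by
  intro p q hpq
  let c : Fin n → α := fun i =>
    if i = ⟨0, by omega⟩ then pᶜ else if i = ⟨n - 1, by omega⟩ then ⊥ else qᶜ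
  have hc0 : c ⟨0, by omega⟩ = pᶜ := if_pos rfl
  have hc1 : c (⟨0, by omega⟩ + ⟨1, by omega⟩) = qᶜ := by
    have h01 : (⟨0, by omega⟩ + ⟨1, by omega⟩ : Fin n) = ⟨1, by omega⟩ :=
      Fin.ext (Nat.mod_eq_of_lt (by omega))
    simp [c, h01, show 1 ≠ n - 1 by omega]
  have hcl : c ⟨n - 1, by omega⟩ = ⊥ := by simp [c, show n - 1 ≠ 0 by omega]
  calc q ⊓ (qᶜ ⊔ p) ≤ goFwd n hn c := (le_goFwd_iff hn).2 fun i => ?_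
    _ ≤ sasaki (c ⟨0, by omega⟩) (c ⟨n - 1, by omega⟩) := h c
    _ = p := by rw [hc0, hcl, sasaki_bot_right, compl_compl]
  by_cases h0 : i = ⟨0, by omega⟩
  · subst h0
    rw [hc0, hc1, sasaki, compl_compl, inf_eq_right.2 (compl_le_compl _ _ hpq), sup_comm]
    exact inf_le_right
  by_cases hl : i = ⟨n - 1, by omega⟩
  · simp only [c, if_neg h0, if_pos hl, sasaki_bot_left, le_top]
  · simp only [c, if_neg h0, if_neg hl]
    exact inf_le_left.trans ((compl_compl q).symm.le.trans (compl_le_sasaki _ _))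

theorem isOrthomodular_of_forall_goFwd_inf_sup
    (h : ∀ a : Fin n → α, goFwd n hn a ⊓ Finset.univ.sup a = Finset.univ.inf a) :
    IsOrthomodular α := by
  intro x y hxy
  let c : Fin n → α := fun i => if i = ⟨0, by omega⟩ then x else y
  have hook : ∀ i j, sasaki y x ≤ sasaki (c i) (c j) := by
    intro i j
    by_cases hi : i = ⟨0, by omega⟩ <;> by_cases hj : j = ⟨0, by omega⟩ <;>
      simp [c, hi, hj, sasaki_of_le hxy, sasaki_of_le (le_refl x), sasaki_of_le (le_refl y)]
  calc y ⊓ (yᶜ ⊔ x) = sasaki y x ⊓ c ⟨1, by omega⟩ := by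
        simp only [c, sasaki, inf_eq_right.2 hxy, inf_comm y, Fin.mk.injEq, one_ne_zero, if_false]
    _ ≤ goFwd n hn c ⊓ Finset.univ.sup c :=
        inf_le_inf ((le_goFwd_iff hn).2 fun i => hook _ _) (Finset.le_sup (Finset.mem_univ _))
    _ = Finset.univ.inf c := h c
    _ ≤ c ⟨0, by omega⟩ := Finset.inf_le (Finset.mem_univ _)
    _ = x := if_pos rfl

theorem IsOrthomodular.goFwd_eq_oequivChain (hα : IsOrthomodular α) {a : Fin n → α}
    (h : goFwd n hn a ≤ goBwd n hn a) : goFwd n hn a = oequivChain a := by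
  have hfwd := (le_goFwd_iff_path hn).1 (le_refl (goFwd n hn a))
  have hbwd := (le_goBwd_iff_path hn).1 h
  refine le_antisymm (le_oequivChain_iff.2 fun i => ?_) ((le_goFwd_iff_path hn).2 ⟨fun i => ?_, ?_⟩)
  · rw [← hα.sasaki_inf_sasaki]
    exact le_inf (hfwd.1 i) (hbwd.1 i)
  · exact (le_oequivChain_iff.1 le_rfl i).trans (oequiv_le_sasaki _ _)
  · exact ((hα.oequivChain_le_oequiv a ⟨n - 1, by omega⟩).trans_eq (oequiv_comm _ _)).trans
      (oequiv_le_sasaki _ _)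

theorem IsOrthomodular.goFwd_inf_sup_eq_inf (hα : IsOrthomodular α) {a : Fin n → α}
    (h : goFwd n hn a = oequivChain a) :
    goFwd n hn a ⊓ Finset.univ.sup a = Finset.univ.inf a := by
  have hinf : Finset.univ.inf a ≤ goFwd n hn a := (le_goFwd_iff hn).2 fun i =>
    (le_inf (Finset.inf_le (Finset.mem_univ _)) (Finset.inf_le (Finset.mem_univ _))).trans
      (inf_le_sasaki _ _)
  refine le_antisymm ?_ (le_inf hinf ((Finset.inf_le (Finset.mem_univ ⟨0, by omega⟩)).trans
    (Finset.le_sup (Finset.mem_univ _))))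
  calc goFwd n hn a ⊓ Finset.univ.sup a
      ≤ (Finset.univ.inf fun j => oequiv (a ⟨0, by omega⟩) (a j)) ⊓ Finset.univ.sup a :=
        inf_le_inf_right _ (Finset.le_inf fun j _ => h.le.trans (hα.oequivChain_le_oequiv a j))
    _ ≤ Finset.univ.inf a := hα.inf_oequiv_inf_sup_le a (Finset.mem_univ _)

theorem IsOrthomodular.goFwd_le_sasaki_of_forall_inf_sup (hα : IsOrthomodular α)
    (h : ∀ a : Fin n → α, goFwd n hn a ⊓ Finset.univ.sup a = Finset.univ.inf a)
    (a : Fin n → α) : goFwd n hn a ≤ sasaki (a ⟨0, by omega⟩) (a ⟨n - 1, by omega⟩) := by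
  set s := Finset.univ.sup a
  have has : ∀ i, a i ≤ s := fun i => Finset.le_sup (Finset.mem_univ i)
  let b : Fin n → α := fun i => sᶜ ⊔ a i
  have hb : Finset.univ.sup b = ⊤ := by
    refine top_le_iff.1 ((sup_compl_self s).symm.le.trans (sup_le ?_ ?_))
    · exact Finset.sup_mono_fun fun i _ => le_sup_right
    · exact le_sup_left.trans (Finset.le_sup (f := b) (Finset.mem_univ ⟨0, by omega⟩))
  calc goFwd n hn a ≤ goFwd n hn b := (le_goFwd_iff hn).2 fun i =>
        ((le_goFwd_iff hn).1 le_rfl i).trans (hα.sasaki_le_sasaki_compl_sup (has i) _)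
    _ = Finset.univ.inf b := by simpa only [hb, inf_top_eq] using h b
    _ ≤ (sᶜ ⊔ a ⟨0, by omega⟩) ⊓ (sᶜ ⊔ a ⟨n - 1, by omega⟩) :=
        le_inf (Finset.inf_le (Finset.mem_univ _)) (Finset.inf_le (Finset.mem_univ _))
    _ ≤ sᶜ ⊔ a ⟨0, by omega⟩ ⊓ a ⟨n - 1, by omega⟩ :=
        hα.compl_sup_inf_compl_sup_le (has _) (has _)
    _ ≤ sasaki (a ⟨0, by omega⟩) (a ⟨n - 1, by omega⟩) :=
        sup_le_sup_right (compl_le_compl _ _ (has _)) _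

end Godowski

end Ortholattice

/-- For an ortholattice `α` and `n ≥ 3`, the following are equivalent:
(i) the n-Go equation `a₁ ≡γ aₙ = aₙ ≡γ a₁`;
(ii) `a₁ ≡γ aₙ = (a₁ ≡ a₂) ⊓ ⋯ ⊓ (aₙ₋₁ ≡ aₙ)`;
(iii) `a₁ ≡γ aₙ ≤ a₁ → aₙ`;
(iv) `(a₁ ≡γ aₙ) ⊓ (a₁ ⊔ ⋯ ⊔ aₙ) = a₁ ⊓ ⋯ ⊓ aₙ`. -/
theorem stmt_11 {α : Type*} [Ortholattice α] (n : ℕ) (hn : 3 ≤ n) :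
    ((∀ a : Fin n → α, goFwd n hn a = goBwd n hn a) ↔
      (∀ a : Fin n → α, goFwd n hn a =
        Finset.univ.inf fun i : Fin (n - 1) =>
          oequiv (a ⟨i.1, by have := i.2; omega⟩) (a ⟨i.1 + 1, by have := i.2; omega⟩))) ∧
    ((∀ a : Fin n → α, goFwd n hn a =
        Finset.univ.inf fun i : Fin (n - 1) =>
          oequiv (a ⟨i.1, by have := i.2; omega⟩) (a ⟨i.1 + 1, by have := i.2; omega⟩)) ↔
      (∀ a : Fin n → α, goFwd n hn a ≤ sasaki (a ⟨0, by omega⟩) (a ⟨n - 1, by omega⟩))) ∧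
    ((∀ a : Fin n → α, goFwd n hn a ≤ sasaki (a ⟨0, by omega⟩) (a ⟨n - 1, by omega⟩)) ↔
      (∀ a : Fin n → α,
        goFwd n hn a ⊓ Finset.univ.sup a = Finset.univ.inf a)) := by
  open Ortholattice in
  have i_iii (h : ∀ a : Fin n → α, goFwd n hn a = goBwd n hn a) (a : Fin n → α) :=
    (h a).trans_le (goBwd_le_sasaki hn a)
  have iii_i := goFwd_eq_goBwd_of_forall_le_sasaki (α := α) hn
  have i_ii (h : ∀ a : Fin n → α, goFwd n hn a = goBwd n hn a) (a : Fin n → α) :=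
    (isOrthomodular_of_forall_goFwd_le_sasaki hn (i_iii h)).goFwd_eq_oequivChain hn (h a).le
  have ii_i (h : ∀ a : Fin n → α, goFwd n hn a = oequivChain a) (a : Fin n → α) :
      goFwd n hn a = goBwd n hn a := by
    rw [← goFwd_comp_rev, h, h, oequivChain_comp_rev]
  refine ⟨⟨i_ii, ii_i⟩, ⟨fun h => i_iii (ii_i h), fun h => i_ii (iii_i h)⟩, fun h a => ?_,
    fun h => ?_⟩
  · exact (isOrthomodular_of_forall_goFwd_le_sasaki hn h).goFwd_inf_sup_eq_inf hn
      (i_ii (iii_i h) a)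
  · exact (isOrthomodular_of_forall_goFwd_inf_sup hn h).goFwd_le_sasaki_of_forall_inf_sup hn h
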